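/- Let d₁ < ... < d_n and v_k ≠ 0 for all k, and f(x) = 1 + Σ_k v_k²/(d_k - x). Then f is strictly increasing on each open interval (d_k, d_{k+1}), and hence f has exactly one root in each interval (d_k, d_{k+1}) for 1 ≤ k ≤ n-1, and exactly one root in (d_n, ∞). -/

import Mathlib

/-!
Each term `v j ^ 2 / (d j - x)` is strictly increasing on any interval free of poles, so the
secular function is strictly increasing there and has at most one root. Just right of a pole it
tends to `-∞`, just left of a pole to `+∞`, and at `+∞` to `1`; so on `(d k, d (k+1))` and on
`(d (n-1), ∞)` it changes sign, and the intermediate value theorem gives the root.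
-/

open Filter Set Topology

theorem IsPreconnected.existsUnique_eq_of_injOn {X α : Type*} [TopologicalSpace X]
    [TopologicalSpace α] [LinearOrder α] [OrderClosedTopology α] {s : Set X} {f : X → α}
    {c : α} (hs : IsPreconnected s) (hf : ContinuousOn f s) (hinj : InjOn f s)
    {l₁ l₂ : Filter X} [NeBot l₁] [NeBot l₂] (hl₁ : l₁ ≤ 𝓟 s) (hl₂ : l₂ ≤ 𝓟 s)
    (hle : ∀ᶠ x in l₁, f x ≤ c) (hge : ∀ᶠ x in l₂, c ≤ f x) :
    ∃! x, x ∈ s ∧ f x = c := by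
  obtain ⟨x, hx, hfx⟩ :=
    hs.intermediate_value₂_eventually₂ hl₁ hl₂ hf continuousOn_const hle hge
  exact ⟨x, ⟨hx, hfx⟩, fun y ⟨hy, hfy⟩ => hinj hy hx (hfy.trans hfx.symm)⟩

theorem div_sub_lt_div_sub {a c x y : ℝ} (hc : 0 < c) (hxy : x < y) (ha : a ∉ Icc x y) :
    c / (a - x) < c / (a - y) := by
  rcases not_and_or.mp ha with hax | hya
  · rw [← neg_sub x a, ← neg_sub y a, div_neg, div_neg, neg_lt_neg_iff]
    exact div_lt_div_of_pos_left hc (by linarith) (by linarith)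
  · exact div_lt_div_of_pos_left hc (by linarith) (by linarith)

theorem tendsto_div_sub_nhdsGT {a c : ℝ} (hc : 0 < c) :
    Tendsto (fun x => c / (a - x)) (𝓝[>] a) atBot := by
  have h : Tendsto (fun x => a - x) (𝓝[>] a) (𝓝[<] 0) := by
    rw [← sub_self a]
    exact (continuous_const.sub continuous_id).continuousWithinAt.tendsto_nhdsWithin
      fun x (hx : a < x) => by simpa using hx
  exact (tendsto_inv_nhdsLT_zero.comp h).const_mul_atBot hc

theorem tendsto_div_sub_nhdsLT {a c : ℝ} (hc : 0 < c) :
    Tendsto (fun x => c / (a - x)) (𝓝[<] a) atTop := by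
  have h : Tendsto (fun x => a - x) (𝓝[<] a) (𝓝[>] 0) := by
    rw [← sub_self a]
    exact (continuous_const.sub continuous_id).continuousWithinAt.tendsto_nhdsWithin
      fun x (hx : x < a) => by simpa using hx
  exact (tendsto_inv_nhdsGT_zero.comp h).const_mul_atTop hc

theorem tendsto_div_sub_atTop (a c : ℝ) : Tendsto (fun x => c / (a - x)) atTop (𝓝 0) :=
  tendsto_const_nhds.div_atBot (tendsto_atBot_add_const_left _ a tendsto_neg_atTop_atBot)

noncomputable def secular {ι : Type*} [Fintype ι] (d v : ι → ℝ) (x : ℝ) : ℝ :=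
  1 + ∑ j, v j ^ 2 / (d j - x)

section Secular

variable {ι : Type*} [Fintype ι] {d v : ι → ℝ}

theorem strictMonoOn_secular [Nonempty ι] (hv : ∀ j, v j ≠ 0) {s : Set ℝ}
    (hs : s.OrdConnected) (hd : ∀ j, d j ∉ s) : StrictMonoOn (secular d v) s := by
  intro x hx y hy hxy
  have hterm : ∀ j, v j ^ 2 / (d j - x) < v j ^ 2 / (d j - y) := fun j =>
    div_sub_lt_div_sub (sq_pos_of_ne_zero (hv j)) hxy fun hj => hd j (hs.out hx hy hj)
  simpa [secular] using Finset.sum_lt_sum_of_nonempty Finset.univ_nonempty fun j _ => hterm j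

theorem continuousOn_secular {s : Set ℝ} (hd : ∀ j, d j ∉ s) :
    ContinuousOn (secular d v) s :=
  continuousOn_const.add <| continuousOn_finsetSum _ fun j _ =>
    continuousOn_const.div (continuousOn_const.sub continuousOn_id)
      fun _ hx => sub_ne_zero.2 fun h => hd j (h ▸ hx)

theorem continuousAt_secular_sub_pole (hd : Function.Injective d) (i : ι) :
    ContinuousAt (fun x => secular d v x - v i ^ 2 / (d i - x)) (d i) := by
  classical
  have h : (fun x => secular d v x - v i ^ 2 / (d i - x)) =
      fun x => 1 + ∑ j ∈ Finset.univ.erase i, v j ^ 2 / (d j - x) := by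
    funext x
    rw [secular, ← Finset.sum_erase_add _ _ (Finset.mem_univ i)]
    ring
  rw [h]
  exact continuousAt_const.add <| tendsto_finsetSum _ fun j hj =>
    continuousAt_const.div (continuousAt_const.sub continuousAt_id)
      (sub_ne_zero.2 fun h => (Finset.ne_of_mem_erase hj) (hd h))

theorem tendsto_secular_nhdsGT (hd : Function.Injective d) {i : ι} (hv : v i ≠ 0) :
    Tendsto (secular d v) (𝓝[>] d i) atBot :=
  (((continuousAt_secular_sub_pole hd i).tendsto.mono_left nhdsWithin_le_nhds).add_atBot
    (tendsto_div_sub_nhdsGT (sq_pos_of_ne_zero hv))).congr fun _ => sub_add_cancel _ _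

theorem tendsto_secular_nhdsLT (hd : Function.Injective d) {i : ι} (hv : v i ≠ 0) :
    Tendsto (secular d v) (𝓝[<] d i) atTop :=
  (((continuousAt_secular_sub_pole hd i).tendsto.mono_left nhdsWithin_le_nhds).add_atTop
    (tendsto_div_sub_nhdsLT (sq_pos_of_ne_zero hv))).congr fun _ => sub_add_cancel _ _

theorem tendsto_secular_atTop : Tendsto (secular d v) atTop (𝓝 1) := by
  have h : Tendsto (fun x => ∑ j, v j ^ 2 / (d j - x)) atTop (𝓝 0) := by
    simpa using tendsto_finsetSum Finset.univ fun j _ => tendsto_div_sub_atTop (d j) (v j ^ 2)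
  rw [← add_zero (1 : ℝ)]
  exact h.const_add 1

theorem existsUnique_secular_eq_zero [Nonempty ι] (hv : ∀ j, v j ≠ 0) {s : Set ℝ}
    (hs : s.OrdConnected) (hd : ∀ j, d j ∉ s) {l₁ l₂ : Filter ℝ} [NeBot l₁] [NeBot l₂]
    (hl₁ : l₁ ≤ 𝓟 s) (hl₂ : l₂ ≤ 𝓟 s) (h₁ : Tendsto (secular d v) l₁ atBot)
    (h₂ : ∀ᶠ x in l₂, 0 ≤ secular d v x) : ∃! x, x ∈ s ∧ secular d v x = 0 :=
  hs.isPreconnected.existsUnique_eq_of_injOn (continuousOn_secular hd)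
    (strictMonoOn_secular hv hs hd).injOn hl₁ hl₂ (h₁.eventually_le_atBot 0) h₂

end Secular

/-- the secular function is strictly increasing on each interval
(d_k, d_{k+1}) and has exactly one root there, and exactly one root in (d_n, ∞). -/
theorem secular_unique_roots {n : ℕ} (hn : 0 < n) (d v : Fin n → ℝ)
    (hd : StrictMono d) (hv : ∀ k, v k ≠ 0) :
    (∀ k : Fin n, ∀ hk : (k : ℕ) + 1 < n,
      StrictMonoOn (fun x : ℝ => 1 + ∑ j, (v j) ^ 2 / (d j - x))
        (Set.Ioo (d k) (d ⟨(k : ℕ) + 1, hk⟩)) ∧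
      ∃! x : ℝ, x ∈ Set.Ioo (d k) (d ⟨(k : ℕ) + 1, hk⟩) ∧
        1 + ∑ j, (v j) ^ 2 / (d j - x) = 0) ∧
    (∃! x : ℝ, x ∈ Set.Ioi (d ⟨n - 1, by omega⟩) ∧
      1 + ∑ j, (v j) ^ 2 / (d j - x) = 0) := by
  have : Nonempty (Fin n) := ⟨⟨0, hn⟩⟩
  refine ⟨fun k hk => ?_, ?_⟩
  · have hpoles : ∀ j, d j ∉ Ioo (d k) (d ⟨k + 1, hk⟩) := fun j ⟨h₁, h₂⟩ => by
      simp only [hd.lt_iff_lt, Fin.lt_def] at h₁ h₂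
      omega
    have hlt : d k < d ⟨k + 1, hk⟩ := hd (Fin.lt_def.2 (Nat.lt_succ_self k))
    exact ⟨strictMonoOn_secular hv ordConnected_Ioo hpoles,
      existsUnique_secular_eq_zero hv ordConnected_Ioo hpoles
        (le_principal_iff.2 (Ioo_mem_nhdsGT hlt)) (le_principal_iff.2 (Ioo_mem_nhdsLT hlt))
        (tendsto_secular_nhdsGT hd.injective (hv k))
        ((tendsto_secular_nhdsLT hd.injective (hv _)).eventually_ge_atTop 0)⟩
  · have hpoles : ∀ j, d j ∉ Ioi (d ⟨n - 1, by omega⟩) := fun j =>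
      not_lt.2 (hd.monotone (Fin.le_def.2 (Nat.le_sub_one_of_lt j.isLt)))
    exact existsUnique_secular_eq_zero hv ordConnected_Ioi hpoles
      (le_principal_iff.2 self_mem_nhdsWithin) (le_principal_iff.2 (Ioi_mem_atTop _))
      (tendsto_secular_nhdsGT hd.injective (hv _))
      (tendsto_secular_atTop.eventually (eventually_ge_nhds zero_lt_one))
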